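/- For 0 < q < 1, p > 0, α > 0 and λ > -1, the Jackson q-integral ∫_0^x t^{p-1} (x^p - (qt)^p)_{q^p}^(α-1) (t^p)_{q^p}^(λ) d_q t equals (1/[p]_q) · (Γ_{q^p}(α) Γ_{q^p}(λ+1) / Γ_{q^p}(α+λ+1)) · (x^p)_{q^p}^(α+λ), where (x^p)_{q^p}^(β) denotes (x^p - 0)_{q^p}^(β) = x^{pβ}. -/

import Mathlib

noncomputable section

open scoped Topology

/-- q-shifted factorial `(a;q)_∞ = ∏_{j≥0} (1 - a q^j)`. -/
def qPochInf (a q : ℝ) : ℝ := ∏' j : ℕ, (1 - a * q ^ j)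

/-- q-number `[a]_q = (1-q^a)/(1-q)`. -/
def qNum (a q : ℝ) : ℝ := (1 - q ^ a) / (1 - q)

/-- generalized q-exponent `(X - Y)_{q'}^{(α)} = X^α (Y/X;q')_∞ / (q'^α Y/X;q')_∞`. -/
def qExpGen (q' α X Y : ℝ) : ℝ := X ^ α * qPochInf (Y / X) q' / qPochInf (q' ^ α * (Y / X)) q'

/-- `(x^p - y^p)_{q^p}^{(α)}`. -/
def genExp (p q α x y : ℝ) : ℝ := qExpGen (q ^ p) α (x ^ p) (y ^ p)

/-- Jackson q-integral `∫_0^b f d_q t = (1-q) b ∑_{i≥0} q^i f(q^i b)`. -/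
def jackson0 (q b : ℝ) (f : ℝ → ℝ) : ℝ := (1 - q) * b * ∑' i : ℕ, q ^ i * f (q ^ i * b)

/-- Jackson q-integral `∫_a^b f d_q t`. -/
def jacksonI (q a b : ℝ) (f : ℝ → ℝ) : ℝ := jackson0 q b f - jackson0 q a f

/-- q-Gamma function `Γ_q(t) = (q;q)_∞ (1-q)^{1-t} / (q^t;q)_∞`. -/
def qGammaF (q t : ℝ) : ℝ := qPochInf q q * (1 - q) ^ (1 - t) / qPochInf (q ^ t) q

/-- q-derivative `D_q f(x) = (f(x)-f(qx))/((1-q)x)`. -/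
def qDeriv (q : ℝ) (f : ℝ → ℝ) (x : ℝ) : ℝ := (f x - f (q * x)) / ((1 - q) * x)

/-- generalized q-fractional integral `J_{a+,p,q}^β`. -/
def Jfrac (q p β a : ℝ) (g : ℝ → ℝ) (x : ℝ) : ℝ :=
  qNum p q ^ (1 - β) / qGammaF (q ^ p) β *
    jacksonI q a x (fun w => w ^ (p - 1) * g w * genExp p q (β - 1) x (w * q))

/-- Riemann–Liouville type generalized q-fractional derivative `D_{a+,p,q}^α`. -/
def RLfrac (q p α a : ℝ) (f : ℝ → ℝ) (x : ℝ) : ℝ :=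
  qNum p q ^ α / qGammaF (q ^ p) (1 - α) *
    (x ^ (1 - p) *
      qDeriv q
        (fun t => jacksonI q a t (fun w => w ^ (p - 1) * f w * genExp p q (-α) t (w * q))) x)

/-- Caputo type generalized q-fractional derivative `ᶜD_{a+,p,q}^α f = D_{a+,p,q}^α (f - f a)`. -/
def caputoFrac (q p α a : ℝ) (f : ℝ → ℝ) (x : ℝ) : ℝ :=
  RLfrac q p α a (fun t => f t - f a) x

/-- successive approximations: `succApprox 0 = ζ` (i.e. φ₁), `succApprox (n+1) = φ_{n+2}`. -/
def succApprox (q p α a ζ : ℝ) (f : ℝ → ℝ → ℝ) : ℕ → ℝ → ℝ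
  | 0 => fun _ => ζ
  | n + 1 => fun t => ζ +
      qNum p q ^ (1 - α) / qGammaF (q ^ p) α *
        jacksonI q a t
          (fun w => w ^ (p - 1) * f w (succApprox q p α a ζ f n w) * genExp p q (α - 1) t (w * q))

/-! With `Q = q ^ p`, the substitution `t = q ^ i * x` turns the Jackson integral into
`(1 - q) x ^ (p (α + l)) (Q;Q)_∞ / (Q^α;Q)_∞ · ∑ᵢ (Q^α;Q)_i / (Q;Q)_i · Z ^ i` with `Z = Q ^ (l + 1)`.
The q-binomial theorem sums this series to `(Q^α Z;Q)_∞ / (Z;Q)_∞`, and the resulting quotient of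
infinite Pochhammer symbols is `Γ_Q(α) Γ_Q(l + 1) / ((1 - Q) Γ_Q(α + l + 1))`.

The q-binomial theorem follows from the functional equation `(1 - z) F(z) = (1 - a z) F(Q z)` of
`F(z) = ∑ₙ (a;Q)_n / (Q;Q)_n · z ^ n`: iterating it `n` times and using `F(Q ^ n z) → F(0) = 1`
gives `F(z) (z;Q)_∞ = (a z;Q)_∞`. -/

open Filter Finset

def qPoch (a Q : ℝ) (n : ℕ) : ℝ := ∏ k ∈ range n, (1 - a * Q ^ k)

section QPochhammer

variable {a Q : ℝ}

lemma one_sub_mul_pow_pos (ha : a < 1) (hQ0 : 0 ≤ Q) (hQ1 : Q ≤ 1) (k : ℕ) :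
    0 < 1 - a * Q ^ k := by
  rcases le_or_gt a 0 with ha0 | ha0
  · nlinarith [mul_nonpos_of_nonpos_of_nonneg ha0 (pow_nonneg hQ0 k)]
  · nlinarith [mul_le_of_le_one_right ha0.le (pow_le_one₀ hQ0 hQ1 (n := k))]

lemma qPoch_pos (ha : a < 1) (hQ0 : 0 ≤ Q) (hQ1 : Q ≤ 1) (n : ℕ) : 0 < qPoch a Q n :=
  prod_pos fun k _ => one_sub_mul_pow_pos ha hQ0 hQ1 k

lemma qPoch_succ (n : ℕ) : qPoch a Q (n + 1) = qPoch a Q n * (1 - a * Q ^ n) :=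
  prod_range_succ _ n

lemma summable_neg_mul_pow (a : ℝ) (hQ : |Q| < 1) : Summable fun k : ℕ => -(a * Q ^ k) :=
  ((summable_geometric_of_abs_lt_one hQ).mul_left a).neg

lemma multipliable_one_sub_mul_pow (a : ℝ) (hQ : |Q| < 1) :
    Multipliable fun k : ℕ => 1 - a * Q ^ k := by
  simpa only [sub_eq_add_neg] using
    Real.multipliable_one_add_of_summable (summable_neg_mul_pow a hQ)

lemma tendsto_qPoch (a : ℝ) (hQ : |Q| < 1) :
    Tendsto (qPoch a Q) atTop (𝓝 (qPochInf a Q)) := by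
  unfold qPoch qPochInf
  exact (multipliable_one_sub_mul_pow a hQ).hasProd.tendsto_prod_nat

lemma qPochInf_eq_qPoch_mul (a : ℝ) (hQ : |Q| < 1) (n : ℕ) :
    qPochInf a Q = qPoch a Q n * qPochInf (a * Q ^ n) Q := by
  have hshift : (fun k : ℕ => 1 - a * Q ^ (k + n)) = fun k => 1 - a * Q ^ n * Q ^ k := by
    ext k
    ring
  have h := multipliable_one_sub_mul_pow (a * Q ^ n) hQ
  rw [← hshift] at h
  have := Multipliable.prod_mul_tprod_nat_mul' (f := fun k => 1 - a * Q ^ k) (k := n) h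
  rw [hshift] at this
  exact this.symm

lemma qPochInf_pos (ha : a < 1) (hQ0 : 0 ≤ Q) (hQ1 : Q < 1) : 0 < qPochInf a Q := by
  have hlog : Summable fun k : ℕ => Real.log (1 - a * Q ^ k) := by
    simpa only [sub_eq_add_neg] using
      Real.summable_log_one_add_of_summable (summable_neg_mul_pow a (abs_lt.2 ⟨by linarith, hQ1⟩))
  rw [qPochInf, ← Real.rexp_tsum_eq_tprod (one_sub_mul_pow_pos ha hQ0 hQ1.le) hlog]
  exact Real.exp_pos _

end QPochhammer

def qBinomCoeff (a Q : ℝ) (n : ℕ) : ℝ := qPoch a Q n / qPoch Q Q n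

def qBinomSeries (a Q z : ℝ) : ℝ := ∑' n, qBinomCoeff a Q n * z ^ n

section QBinomial

variable {a Q z : ℝ}

lemma abs_pow_mul_lt_one (hQ : |Q| < 1) (hz : |z| < 1) (n : ℕ) : |Q ^ n * z| < 1 := by
  rw [abs_mul, abs_pow]
  nlinarith [abs_nonneg z, pow_le_one₀ (abs_nonneg Q) hQ.le (n := n), pow_nonneg (abs_nonneg Q) n]

lemma qBinomCoeff_succ (n : ℕ) :
    qBinomCoeff a Q (n + 1) = qBinomCoeff a Q n * ((1 - a * Q ^ n) / (1 - Q * Q ^ n)) := by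
  rw [qBinomCoeff, qBinomCoeff, qPoch_succ, qPoch_succ, mul_div_mul_comm]

lemma qPochInf_mul_pow_div_qPochInf_mul_pow (ha : a < 1) (hQ0 : 0 ≤ Q) (hQ1 : Q < 1)
    (n : ℕ) :
    qPochInf (Q * Q ^ n) Q / qPochInf (a * Q ^ n) Q =
      qPochInf Q Q / qPochInf a Q * qBinomCoeff a Q n := by
  have hQ : |Q| < 1 := abs_lt.2 ⟨by linarith, hQ1⟩
  have ha' := (qPoch_pos ha hQ0 hQ1.le n).ne'
  have hQ' := (qPoch_pos hQ1 hQ0 hQ1.le n).ne'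
  rw [qPochInf_eq_qPoch_mul a hQ n, qPochInf_eq_qPoch_mul Q hQ n, qBinomCoeff]
  field_simp

lemma summable_norm_qBinomCoeff_mul_pow (a : ℝ) (hQ : |Q| < 1) (hz : |z| < 1) :
    Summable fun n => ‖qBinomCoeff a Q n * z ^ n‖ := by
  set ratio : ℕ → ℝ := fun n => |z| * |(1 - a * Q ^ n) / (1 - Q * Q ^ n)|
  have hQn := tendsto_pow_atTop_nhds_zero_of_abs_lt_one hQ
  have hnum : Tendsto (fun n => 1 - a * Q ^ n) atTop (𝓝 1) := by
    simpa using tendsto_const_nhds.sub (hQn.const_mul a)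
  have hden : Tendsto (fun n => 1 - Q * Q ^ n) atTop (𝓝 1) := by
    simpa using tendsto_const_nhds.sub (hQn.const_mul Q)
  have hratio : Tendsto ratio atTop (𝓝 |z|) := by
    simpa using ((hnum.div hden one_ne_zero).abs.const_mul |z|)
  refine summable_of_ratio_norm_eventually_le (r := (1 + |z|) / 2) (by linarith) ?_
  filter_upwards [hratio.eventually_le_const (by linarith : |z| < (1 + |z|) / 2)] with n hn
  calc ‖‖qBinomCoeff a Q (n + 1) * z ^ (n + 1)‖‖ = ratio n * ‖‖qBinomCoeff a Q n * z ^ n‖‖ := by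
        simp only [ratio, qBinomCoeff_succ, pow_succ, norm_mul, Real.norm_eq_abs, abs_abs]
        ring
    _ ≤ (1 + |z|) / 2 * ‖‖qBinomCoeff a Q n * z ^ n‖‖ := by gcongr

lemma one_sub_mul_qBinomSeries (a : ℝ) (hQ : |Q| < 1) (hz : |z| < 1) :
    (1 - z) * qBinomSeries a Q z = (1 - a * z) * qBinomSeries a Q (Q * z) := by
  have hQz : |Q * z| < 1 := by simpa using abs_pow_mul_lt_one hQ hz 1
  set c := qBinomCoeff a Q
  set u : ℕ → ℝ := fun n => c n * (1 - Q ^ n) * z ^ n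
  have hs := (summable_norm_qBinomCoeff_mul_pow a hQ hz).of_norm
  have hs' := (summable_norm_qBinomCoeff_mul_pow a hQ hQz).of_norm
  have hu : Summable u := (hs.sub hs').congr fun n => by simp only [u, mul_pow]; ring
  have hterm : ∀ n, (1 - z) * (c n * z ^ n) - (1 - a * z) * (c n * (Q * z) ^ n) =
      u n - u (n + 1) := by
    intro n
    have hden : 1 - Q * Q ^ n ≠ 0 := by
      have h := pow_lt_one₀ (abs_nonneg Q) hQ n.succ_ne_zero
      rw [← abs_pow, pow_succ'] at h
      exact (sub_pos.2 (lt_of_abs_lt h)).ne'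
    have hrec : c (n + 1) * (1 - Q * Q ^ n) = c n * (1 - a * Q ^ n) := by
      rw [show c (n + 1) = c n * _ from qBinomCoeff_succ n, mul_assoc, div_mul_cancel₀ _ hden]
    simp only [u, pow_succ', mul_pow]
    linear_combination (z * z ^ n) * hrec
  rw [qBinomSeries, qBinomSeries, ← tsum_mul_left, ← tsum_mul_left, ← sub_eq_zero,
    ← (hs.mul_left _).tsum_sub (hs'.mul_left _), tsum_congr hterm,
    hu.tsum_sub ((summable_nat_add_iff 1).2 hu), hu.tsum_eq_zero_add]
  simp [u]

lemma qBinomSeries_mul_qPoch (a : ℝ) (hQ : |Q| < 1) (hz : |z| < 1) (n : ℕ) :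
    qBinomSeries a Q z * qPoch z Q n = qBinomSeries a Q (Q ^ n * z) * qPoch (a * z) Q n := by
  induction n with
  | zero => simp [qPoch]
  | succ n ih =>
    have hstep := one_sub_mul_qBinomSeries a hQ (abs_pow_mul_lt_one hQ hz n)
    rw [← mul_assoc Q, ← pow_succ'] at hstep
    rw [qPoch_succ, qPoch_succ, ← mul_assoc, ih]
    linear_combination qPoch (a * z) Q n * hstep

lemma tendsto_qBinomSeries_pow_mul (a : ℝ) (hQ : |Q| < 1) (hz : |z| < 1) :
    Tendsto (fun n => qBinomSeries a Q (Q ^ n * z)) atTop (𝓝 1) := by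
  have hQn := tendsto_pow_atTop_nhds_zero_of_abs_lt_one hQ
  have hlim : ∑' k, qBinomCoeff a Q k * 0 ^ k = 1 := by
    rw [tsum_eq_single 0 fun k hk => by simp [hk]]
    simp [qBinomCoeff, qPoch]
  rw [← hlim]
  refine tendsto_tsum_of_dominated_convergence (summable_norm_qBinomCoeff_mul_pow a hQ hz)
    (fun k => ?_) (Eventually.of_forall fun n k => ?_)
  · simpa using ((hQn.mul_const z).pow k).const_mul (qBinomCoeff a Q k)
  · simp only [norm_mul, norm_pow, Real.norm_eq_abs]
    gcongr
    exact mul_le_of_le_one_left (abs_nonneg z) (pow_le_one₀ (abs_nonneg Q) hQ.le)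

theorem qBinomSeries_mul_qPochInf (a : ℝ) (hQ : |Q| < 1) (hz : |z| < 1) :
    qBinomSeries a Q z * qPochInf z Q = qPochInf (a * z) Q := by
  refine tendsto_nhds_unique ((tendsto_qPoch z hQ).const_mul _) ?_
  simpa only [qBinomSeries_mul_qPoch a hQ hz, one_mul] using
    (tendsto_qBinomSeries_pow_mul a hQ hz).mul (tendsto_qPoch (a * z) hQ)

theorem qBinomSeries_eq_div (a : ℝ) (hQ0 : 0 ≤ Q) (hQ1 : Q < 1) (hz : |z| < 1) :
    qBinomSeries a Q z = qPochInf (a * z) Q / qPochInf z Q := by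
  rw [eq_div_iff (qPochInf_pos (lt_of_abs_lt hz) hQ0 hQ1).ne',
    qBinomSeries_mul_qPochInf a (abs_lt.2 ⟨by linarith, hQ1⟩) hz]

end QBinomial

lemma qGammaF_mul_qGammaF_div {Q : ℝ} (hQ0 : 0 ≤ Q) (hQ1 : Q < 1) (a b : ℝ) :
    qGammaF Q a * qGammaF Q b / qGammaF Q (a + b) =
      (1 - Q) * (qPochInf Q Q / (qPochInf (Q ^ a) Q * qPochInf (Q ^ b) Q)) *
        qPochInf (Q ^ (a + b)) Q := by
  have hB : 0 < 1 - Q := by linarith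
  have hP := (qPochInf_pos hQ1 hQ0 hQ1).ne'
  have hR := (Real.rpow_pos_of_pos hB (1 - (a + b))).ne'
  have hexp : (1 - Q) ^ (1 - a) * (1 - Q) ^ (1 - b) = (1 - Q) * (1 - Q) ^ (1 - (a + b)) := by
    rw [← Real.rpow_add hB, show 1 - a + (1 - b) = 1 + (1 - (a + b)) by ring,
      Real.rpow_add hB, Real.rpow_one]
  -- Working with inverses, no Pochhammer factor needs to be nonzero except `(Q;Q)_∞`.
  simp only [qGammaF, div_eq_mul_inv, mul_inv, inv_inv]
  calc _ = (1 - Q) ^ (1 - a) * (1 - Q) ^ (1 - b) * (qPochInf Q Q * (qPochInf Q Q)⁻¹) *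
          ((1 - Q) ^ (1 - (a + b)))⁻¹ * qPochInf Q Q * (qPochInf (Q ^ a) Q)⁻¹ *
          (qPochInf (Q ^ b) Q)⁻¹ * qPochInf (Q ^ (a + b)) Q := by ring
    _ = _ := by rw [hexp, mul_inv_cancel₀ hP]; field_simp

section JacksonSum

variable {p q x : ℝ}

lemma genExp_pow_mul (hq : 0 ≤ q) (hx : 0 < x) (β : ℝ) (n : ℕ) :
    genExp p q β x (q ^ n * x) =
      x ^ (p * β) *
        (qPochInf ((q ^ p) ^ n) (q ^ p) / qPochInf ((q ^ p) ^ β * (q ^ p) ^ n) (q ^ p)) := by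
  rw [genExp, qExpGen, mul_div_assoc, Real.mul_rpow (pow_nonneg hq n) hx.le,
    mul_div_cancel_right₀ _ (Real.rpow_pos_of_pos hx p).ne', ← Real.rpow_pow_comm hq,
    ← Real.rpow_mul hx.le]

lemma pow_mul_rpow_mul_rpow (hq : 0 < q) (hx : 0 < x) (l : ℝ) (n : ℕ) :
    q ^ n * ((q ^ n * x) ^ (p - 1) * (q ^ n * x) ^ (p * l)) =
      x ^ (p * (l + 1) - 1) * ((q ^ p) ^ (l + 1)) ^ n := by
  have hsplit (s : ℝ) : (q ^ n * x) ^ s = (q ^ s) ^ n * x ^ s := by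
    rw [Real.mul_rpow (pow_nonneg hq.le n) hx.le, ← Real.rpow_pow_comm hq.le]
  have hq_exp : q * q ^ (p - 1) * q ^ (p * l) = (q ^ p) ^ (l + 1) := by
    rw [Real.rpow_sub_one hq.ne', mul_div_cancel₀ _ hq.ne', ← Real.rpow_add hq,
      ← Real.rpow_mul hq.le]
    ring_nf
  have hx_exp : x ^ (p * (l + 1) - 1) = x ^ (p - 1) * x ^ (p * l) := by
    rw [← Real.rpow_add hx]
    ring_nf
  rw [hsplit, hsplit, hx_exp, ← hq_exp, mul_pow, mul_pow]
  ring

lemma jackson_summand_eq (hq0 : 0 < q) (hq1 : q < 1) (hp : 0 < p) {α : ℝ} (hα : 0 < α)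
    (hx : 0 < x) (l : ℝ) (i : ℕ) :
    q ^ i * ((q ^ i * x) ^ (p - 1) * genExp p q (α - 1) x (q * (q ^ i * x)) *
        (q ^ i * x) ^ (p * l)) =
      x ^ (p * (α + l) - 1) * (qPochInf (q ^ p) (q ^ p) / qPochInf ((q ^ p) ^ α) (q ^ p)) *
        (qBinomCoeff ((q ^ p) ^ α) (q ^ p) i * ((q ^ p) ^ (l + 1)) ^ i) := by
  have hQ0 : 0 < q ^ p := Real.rpow_pos_of_pos hq0 p
  have hQ1 : q ^ p < 1 := Real.rpow_lt_one hq0.le hq1 hp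
  have hshift : (q ^ p) ^ (α - 1) * (q ^ p) ^ (i + 1) = (q ^ p) ^ α * (q ^ p) ^ i := by
    rw [Real.rpow_sub_one hQ0.ne', pow_succ']
    field_simp
  have hx_exp : x ^ (p * (α + l) - 1) = x ^ (p * (α - 1)) * x ^ (p * (l + 1) - 1) := by
    rw [← Real.rpow_add hx]
    ring_nf
  rw [← mul_assoc q, ← pow_succ', genExp_pow_mul hq0.le hx, hshift, pow_succ',
    qPochInf_mul_pow_div_qPochInf_mul_pow (Real.rpow_lt_one hQ0.le hQ1 hα) hQ0.le hQ1, hx_exp]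
  linear_combination x ^ (p * (α - 1)) *
    (qPochInf (q ^ p) (q ^ p) / qPochInf ((q ^ p) ^ α) (q ^ p)) *
    qBinomCoeff ((q ^ p) ^ α) (q ^ p) i * pow_mul_rpow_mul_rpow hq0 hx l i

end JacksonSum

theorem stmt4 (p q α l x : ℝ) (hq0 : 0 < q) (hq1 : q < 1) (hp : 0 < p)
    (hα : 0 < α) (hl : -1 < l) (hx : 0 < x) :
    jackson0 q x (fun t => t ^ (p - 1) * genExp p q (α - 1) x (q * t) * t ^ (p * l)) =
      1 / qNum p q *
        (qGammaF (q ^ p) α * qGammaF (q ^ p) (l + 1) / qGammaF (q ^ p) (α + l + 1)) *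
        x ^ (p * (α + l)) := by
  simp only [jackson0, jackson_summand_eq hq0 hq1 hp hα hx, tsum_mul_left, qNum]
  set Q := q ^ p
  have hQ0 : 0 < Q := Real.rpow_pos_of_pos hq0 p
  have hQ1 : Q < 1 := Real.rpow_lt_one hq0.le hq1 hp
  have hZ : |Q ^ (l + 1)| < 1 := by
    rw [abs_of_pos (Real.rpow_pos_of_pos hQ0 _)]
    exact Real.rpow_lt_one hQ0.le hQ1 (by linarith)
  rw [← qBinomSeries, qBinomSeries_eq_div _ hQ0.le hQ1 hZ, ← Real.rpow_add hQ0, add_assoc α l 1,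
    qGammaF_mul_qGammaF_div hQ0.le hQ1, Real.rpow_sub_one hx.ne']
  have hB := (sub_pos.2 hQ1).ne'
  have hPA := (qPochInf_pos (Real.rpow_lt_one hQ0.le hQ1 hα) hQ0.le hQ1).ne'
  have hPZ := (qPochInf_pos (lt_of_abs_lt hZ) hQ0.le hQ1).ne'
  field_simp
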